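/- arXiv:1606.08256 — 5 statements merged into one kernel-verified Lean document; each statement's English description precedes it below -/
import Mathlib

section
/- Let d ≥ 1, λ > 0, let R and S be real symmetric positive semidefinite d×d matrices, let B : ℝ → Matrix(d,d,ℝ) be such that for every t ≥ 0 and every v ∈ ℝ^d, ⟪v, (B(t) + B(t)ᵀ) v⟫ ≤ -λ‖v‖², and let P : ℝ → Matrix(d,d,ℝ) be differentiable with P(t) symmetric positive semidefinite for all t ≥ 0 and satisfying the Riccati equation P'(t) = B(t)·P(t) + P(t)·B(t)ᵀ + R - P(t)·S·P(t). Then for all t ≥ 0, tr(P(t)) ≤ e^{-λt}·tr(P(0)) + tr(R)/λ. -/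
/-!
Taking traces in the Riccati equation, `tr (P S P) ≥ 0` and `tr (P Bᵀ) = tr (Bᵀ P)` give
`(tr P)' ≤ tr ((B + Bᵀ) P) + tr R`. Writing `P = C C` with `C = √P` symmetric,
`tr ((B + Bᵀ) P) = ∑ᵢ ⟪cᵢ, (B + Bᵀ) cᵢ⟫ ≤ -λ ∑ᵢ ‖cᵢ‖² = -λ tr P` over the rows `cᵢ` of `C`.
The scalar differential inequality `f' ≤ -λ f + tr R` then yields the bound by Grönwall.
-/

open Matrix

open scoped MatrixOrder in
theorem Matrix.trace_mul_le_of_dotProduct_mulVec_le {n : Type*} [Fintype n]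
    {M A : Matrix n n ℝ} {c : ℝ} (hA : A.PosSemidef)
    (hM : ∀ v : n → ℝ, v ⬝ᵥ (M *ᵥ v) ≤ c * (v ⬝ᵥ v)) :
    (M * A).trace ≤ c * A.trace := by
  classical
  set C := CFC.sqrt A
  have hCT : Cᵀ = C := by
    simpa [conjTranspose_eq_transpose_of_trivial] using (CFC.sqrt_nonneg A).posSemidef.1.eq
  have hCC : C * C = A := CFC.sqrt_mul_sqrt_self A hA.nonneg
  have quad : ∀ N : Matrix n n ℝ, (C * N * C).trace = ∑ i, C i ⬝ᵥ (N *ᵥ C i) := fun N => by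
    simp only [trace, diag, mul_mul_apply, hCT]
  calc (M * A).trace = (C * M * C).trace := by rw [← hCC, trace_mul_cycle', Matrix.mul_assoc]
    _ = ∑ i, C i ⬝ᵥ (M *ᵥ C i) := quad M
    _ ≤ ∑ i, c * (C i ⬝ᵥ C i) := Finset.sum_le_sum fun i _ => hM (C i)
    _ = c * (C * 1 * C).trace := by simp only [quad, one_mulVec, Finset.mul_sum]
    _ = c * A.trace := by rw [Matrix.mul_one, hCC]

theorem Matrix.trace_riccati_le {n : Type*} [Fintype n] {B P R S : Matrix n n ℝ} {lam : ℝ}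
    (hP : P.PosSemidef) (hS : S.PosSemidef)
    (hB : ∀ v : n → ℝ, v ⬝ᵥ ((B + Bᵀ) *ᵥ v) ≤ -lam * (v ⬝ᵥ v)) :
    (B * P + P * Bᵀ + R - P * S * P).trace ≤ -lam * P.trace + R.trace := by
  have hPSP : 0 ≤ (P * S * P).trace := by
    simpa only [hP.1.eq] using (hS.conjTranspose_mul_mul_same P).trace_nonneg
  have hdrift : ((B + Bᵀ) * P).trace ≤ -lam * P.trace :=
    trace_mul_le_of_dotProduct_mulVec_le hP hB
  rw [Matrix.add_mul, trace_add, trace_mul_comm Bᵀ] at hdrift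
  rw [trace_sub, trace_add, trace_add]
  linarith

theorem Matrix.hasDerivAt_trace {n : Type*} [Fintype n] {P : ℝ → Matrix n n ℝ}
    {P' : Matrix n n ℝ} {t : ℝ} (h : ∀ i, HasDerivAt (fun s => P s i i) (P' i i) t) :
    HasDerivAt (fun s => (P s).trace) P'.trace t :=
  HasDerivAt.fun_sum fun i _ => h i

theorem le_exp_mul_add_div_of_deriv_le {f f' : ℝ → ℝ} {lam r : ℝ} (hlam : 0 < lam)
    (hr : 0 ≤ r) (hf : ∀ t, 0 ≤ t → HasDerivAt f (f' t) t)
    (bound : ∀ t, 0 ≤ t → f' t ≤ -lam * f t + r) :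
    ∀ t, 0 ≤ t → f t ≤ Real.exp (-lam * t) * f 0 + r / lam := by
  intro t ht
  have hgron : f t ≤ gronwallBound (f 0) (-lam) r (t - 0) :=
    le_gronwallBound_of_liminf_deriv_right_le
      (fun x hx => (hf x hx.1).continuousAt.continuousWithinAt)
      (fun x hx _ hr' => (hf x hx.1).hasDerivWithinAt.liminf_right_slope_le hr')
      le_rfl (fun x hx => bound x hx.1) t ⟨ht, le_rfl⟩
  rw [gronwallBound_of_K_ne_0 (neg_ne_zero.mpr hlam.ne'), sub_zero] at hgron
  have hexp : 0 ≤ Real.exp (-lam * t) := Real.exp_nonneg _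
  have : r / -lam * (Real.exp (-lam * t) - 1) ≤ r / lam := by
    rw [div_neg, neg_mul, ← mul_neg, neg_sub]
    exact mul_le_of_le_one_right (div_nonneg hr hlam.le) (by linarith)
  linarith

theorem stmt_1_general (d : ℕ) (lam : ℝ) (hlam : 0 < lam)
    (R S : Matrix (Fin d) (Fin d) ℝ) (hR : R.PosSemidef) (hS : S.PosSemidef)
    (B : ℝ → Matrix (Fin d) (Fin d) ℝ)
    (hB : ∀ t : ℝ, 0 ≤ t → ∀ v : Fin d → ℝ,
      v ⬝ᵥ ((B t + (B t)ᵀ) *ᵥ v) ≤ -lam * (v ⬝ᵥ v))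
    (P : ℝ → Matrix (Fin d) (Fin d) ℝ)
    (hP : ∀ t : ℝ, 0 ≤ t → (P t).PosSemidef)
    (hP' : ∀ t : ℝ, 0 ≤ t → ∀ i j : Fin d,
      HasDerivAt (fun s => P s i j)
        ((B t * P t + P t * (B t)ᵀ + R - P t * S * P t) i j) t) :
    ∀ t : ℝ, 0 ≤ t →
      (P t).trace ≤ Real.exp (-lam * t) * (P 0).trace + R.trace / lam :=
  le_exp_mul_add_div_of_deriv_le hlam hR.trace_nonneg
    (fun t ht => hasDerivAt_trace fun i => hP' t ht i i)
    (fun t ht => trace_riccati_le (hP t ht) hS (hB t ht))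

/-- Trace bound for the stochastic Riccati equation: if the symmetrized drift matrix
`B t + B tᵀ` has log-norm at most `-λ` and `P` solves the Riccati equation
`P' = B P + P Bᵀ + R - P S P` with `P t`, `R`, `S` symmetric positive semidefinite,
then `tr (P t) ≤ e^{-λ t} tr (P 0) + tr R / λ` for all `t ≥ 0`. -/
theorem stmt_1 (d : ℕ) (hd : 1 ≤ d) (lam : ℝ) (hlam : 0 < lam)
    (R S : Matrix (Fin d) (Fin d) ℝ) (hR : R.PosSemidef) (hS : S.PosSemidef)
    (B : ℝ → Matrix (Fin d) (Fin d) ℝ)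
    (hB : ∀ t : ℝ, 0 ≤ t → ∀ v : Fin d → ℝ,
      v ⬝ᵥ ((B t + (B t)ᵀ) *ᵥ v) ≤ -lam * (v ⬝ᵥ v))
    (P : ℝ → Matrix (Fin d) (Fin d) ℝ)
    (hP : ∀ t : ℝ, 0 ≤ t → (P t).PosSemidef)
    (hP' : ∀ t : ℝ, 0 ≤ t → ∀ i j : Fin d,
      HasDerivAt (fun s => P s i j)
        ((B t * P t + P t * (B t)ᵀ + R - P t * S * P t) i j) t) :
    ∀ t : ℝ, 0 ≤ t →
      (P t).trace ≤ Real.exp (-lam * t) * (P 0).trace + R.trace / lam :=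
  stmt_1_general d lam hlam R S hR hS B hB P hP hP'
end

section
/- Let d ≥ 1 and let Q be a real symmetric positive semidefinite d×d matrix. For x ∈ ℝ^d define the symmetric matrix H(x) = ⟪Qx, x⟫^{1/2}·Q + ⟪Qx, x⟫^{-1/2}·(Qx)(Qx)ᵀ, where (Qx)(Qx)ᵀ denotes the outer product and where, when ⟪Qx, x⟫ = 0, the second term is taken to be the zero matrix. Then for all x, y ∈ ℝ^d, ‖H(x) - H(y)‖ ≤ 2·‖Q‖^{3/2}·‖x - y‖, where ‖·‖ applied to matrices is the ℓ²-operator norm. -/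
/-!
Write `Q = Bᴴ B`. For `u = B x` one has `⟪Qx, x⟫ = ‖u‖²` and `Qx = Bᴴ u`, so `H x = Bᴴ A(B x) B`
where `A(u) = ‖u‖ I + ‖u‖⁻¹ u uᵀ` is the Hessian of `‖u‖³ / 3`. As `‖B‖² = ‖Q‖`, it suffices that
`A` is `2`-Lipschitz. Since `A(u) - A(v)` is symmetric, this is a bound on the quadratic forms
`⟪A(u) w, w⟫ = ‖u‖ ‖w‖² + ⟪u, w⟫² / ‖u‖`, which depend on `u` only through `(r, a) = (‖u‖, ⟪u, w⟫)`,
and both coordinates are `1`-Lipschitz in `u` (with constant `‖w‖` for `a`). The function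
`(r, a) ↦ r c² + a² / r` is convex and its gradient `(c² - t², 2t)`, `t = a / r`, has
`ℓ¹`-norm `c² - t² + 2|t| c ≤ 2c²` on the cone `|a| ≤ r c`.
-/

open Matrix
open scoped Matrix.Norms.L2Operator RealInnerProductSpace

/-- Tangent-plane inequality for the convex function `(r, a) ↦ a² / r` on `r > 0`. -/
lemma sq_div_sub_sq_div_le {r s : ℝ} (hr : 0 < r) (hs : 0 < s) (a b : ℝ) :
    a ^ 2 / r - b ^ 2 / s ≤ (a / r) ^ 2 * (s - r) + 2 * (a / r) * (a - b) := by
  have hgap : (a / r) ^ 2 * (s - r) + 2 * (a / r) * (a - b) - (a ^ 2 / r - b ^ 2 / s) =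
      (r * b - a * s) ^ 2 / (s * r ^ 2) := by
    field_simp
    ring
  have : 0 ≤ (r * b - a * s) ^ 2 / (s * r ^ 2) := by positivity
  linarith

lemma mul_sq_add_sq_div_sub_le {r s δ a b c : ℝ} (hr : 0 ≤ r) (hs : 0 ≤ s)
    (ha : |a| ≤ r * c) (hab : |a - b| ≤ δ * c) (hrs : |r - s| ≤ δ) :
    (r * c ^ 2 + a ^ 2 / r) - (s * c ^ 2 + b ^ 2 / s) ≤ 2 * δ * c ^ 2 := by
  have hδ : 0 ≤ δ := (abs_nonneg _).trans hrs
  rcases hr.eq_or_lt with rfl | hr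
  · have : a = 0 := abs_nonpos_iff.mp (by simpa using ha)
    subst this
    have : 0 ≤ b ^ 2 / s := by positivity
    nlinarith [mul_nonneg hs (sq_nonneg c), mul_nonneg hδ (sq_nonneg c)]
  rcases hs.eq_or_lt with rfl | hs
  · have hrδ : r ≤ δ := by simpa [abs_of_pos hr] using hrs
    have : a ^ 2 / r ≤ r * c ^ 2 := by
      rw [div_le_iff₀ hr]
      nlinarith [sq_abs a, abs_nonneg a]
    simp only [div_zero, zero_mul, add_zero]
    nlinarith [mul_le_mul_of_nonneg_right hrδ (sq_nonneg c)]
  set t := a / r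
  have ht : |t| ≤ c := by
    rw [abs_div, abs_of_pos hr, div_le_iff₀ hr]; linarith
  have hconv := sq_div_sub_sq_div_le hr hs a b
  have hr_term : (c ^ 2 - t ^ 2) * (r - s) ≤ (c ^ 2 - t ^ 2) * δ :=
    mul_le_mul_of_nonneg_left (le_of_abs_le hrs) (by nlinarith [sq_abs t, abs_nonneg t])
  have ha_term : 2 * t * (a - b) ≤ 2 * |t| * (δ * c) := by
    have := (le_abs_self (t * (a - b))).trans_eq (abs_mul t (a - b))
    nlinarith [mul_le_mul_of_nonneg_left hab (abs_nonneg t)]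
  nlinarith [mul_nonneg hδ (sq_nonneg (c - |t|)), sq_abs t]

lemma abs_mul_sq_add_sq_div_sub_le {r s δ a b c : ℝ} (hr : 0 ≤ r) (hs : 0 ≤ s)
    (ha : |a| ≤ r * c) (hb : |b| ≤ s * c) (hab : |a - b| ≤ δ * c) (hrs : |r - s| ≤ δ) :
    |(r * c ^ 2 + a ^ 2 / r) - (s * c ^ 2 + b ^ 2 / s)| ≤ 2 * δ * c ^ 2 := by
  rw [abs_le, neg_le, neg_sub]
  exact ⟨mul_sq_add_sq_div_sub_le hs hr hb (by rwa [abs_sub_comm]) (by rwa [abs_sub_comm]),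
    mul_sq_add_sq_div_sub_le hr hs ha hab hrs⟩

namespace Matrix

lemma IsHermitian.l2_opNorm_le_of_abs_dotProduct_mulVec_le {n : Type*} [Fintype n]
    [DecidableEq n] {M : Matrix n n ℝ} (hM : M.IsHermitian) {c : ℝ} (hc : 0 ≤ c)
    (h : ∀ w : EuclideanSpace ℝ n, |w ⬝ᵥ M *ᵥ w| ≤ c * ‖w‖ ^ 2) : ‖M‖ ≤ c := by
  have hsymm : (toEuclideanCLM (𝕜 := ℝ) M).IsSymmetric := by
    rw [coe_toEuclideanCLM_eq_toEuclideanLin]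
    exact isSymmetric_toEuclideanLin_iff.mpr hM
  rw [cstar_norm_def, ContinuousLinearMap.norm_eq_iSup_rayleighQuotient _ hsymm]
  refine ciSup_le fun w => ?_
  rcases eq_or_ne w 0 with rfl | hw
  · simpa using hc
  rw [ContinuousLinearMap.rayleighQuotient, ContinuousLinearMap.reApplyInnerSelf_apply,
    real_inner_comm, inner_toEuclideanCLM, RCLike.re_to_real, abs_div,
    abs_of_pos (pow_pos (norm_pos_iff.mpr hw) 2), div_le_iff₀ (by positivity)]
  exact h w

lemma l2_opNorm_conjTranspose_mul_mul_self_le {m n : Type*} [Fintype m] [Fintype n]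
    [DecidableEq m] [DecidableEq n] (B : Matrix m n ℝ) (M : Matrix m m ℝ) :
    ‖Bᴴ * M * B‖ ≤ ‖M‖ * ‖B‖ ^ 2 :=
  calc ‖Bᴴ * M * B‖ ≤ ‖Bᴴ‖ * ‖M‖ * ‖B‖ :=
        (l2_opNorm_mul _ _).trans (mul_le_mul_of_nonneg_right (l2_opNorm_mul _ _) (norm_nonneg _))
    _ = ‖M‖ * ‖B‖ ^ 2 := by rw [l2_opNorm_conjTranspose]; ring

end Matrix

section CubeNormHessian

variable {n : Type*} [Fintype n] [DecidableEq n]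

/-- The Hessian of `u ↦ ‖u‖ ^ 3 / 3`; at `u = 0` it is `0`, since `‖0‖⁻¹ = 0`. -/
noncomputable def cubeNormHessian (u : EuclideanSpace ℝ n) : Matrix n n ℝ :=
  ‖u‖ • 1 + ‖u‖⁻¹ • vecMulVec u u

lemma isHermitian_cubeNormHessian (u : EuclideanSpace ℝ n) : (cubeNormHessian u).IsHermitian :=
  (isHermitian_one.smul (.all _)).add
    ((by simp [IsHermitian] : (vecMulVec u u).IsHermitian).smul (.all _))

lemma dotProduct_cubeNormHessian_mulVec (u w : EuclideanSpace ℝ n) :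
    w ⬝ᵥ cubeNormHessian u *ᵥ w = ‖u‖ * ‖w‖ ^ 2 + ⟪u, w⟫ ^ 2 / ‖u‖ := by
  simp only [cubeNormHessian, add_mulVec, smul_mulVec, one_mulVec, vecMulVec_mulVec]
  have hdot (a b : EuclideanSpace ℝ n) : a.ofLp ⬝ᵥ b.ofLp = ⟪b, a⟫ := by
    simp [EuclideanSpace.inner_eq_star_dotProduct]
  rw [op_smul_eq_smul, dotProduct_add, dotProduct_smul, dotProduct_smul, dotProduct_smul]
  simp only [hdot, real_inner_self_eq_norm_sq, real_inner_comm w u, smul_eq_mul]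
  ring

lemma l2_opNorm_cubeNormHessian_sub_le (u v : EuclideanSpace ℝ n) :
    ‖cubeNormHessian u - cubeNormHessian v‖ ≤ 2 * ‖u - v‖ := by
  refine ((isHermitian_cubeNormHessian u).sub (isHermitian_cubeNormHessian v))
    |>.l2_opNorm_le_of_abs_dotProduct_mulVec_le (by positivity) fun w => ?_
  rw [sub_mulVec, dotProduct_sub, dotProduct_cubeNormHessian_mulVec,
    dotProduct_cubeNormHessian_mulVec]
  refine abs_mul_sq_add_sq_div_sub_le (norm_nonneg u) (norm_nonneg v)
    (abs_real_inner_le_norm u w) (abs_real_inner_le_norm v w) ?_ (abs_norm_sub_norm_le u v)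
  rw [← inner_sub_left]
  exact abs_real_inner_le_norm _ _

end CubeNormHessian

lemma conjTranspose_mul_cubeNormHessian_mul {m n : Type*} [Fintype m] [Fintype n] [DecidableEq m]
    (B : Matrix m n ℝ) (x : EuclideanSpace ℝ n) :
    Bᴴ * cubeNormHessian (WithLp.toLp 2 (B *ᵥ x)) * B =
      √(((Bᴴ * B) *ᵥ x) ⬝ᵥ x) • (Bᴴ * B) +
        (√(((Bᴴ * B) *ᵥ x) ⬝ᵥ x))⁻¹ • vecMulVec ((Bᴴ * B) *ᵥ x) ((Bᴴ * B) *ᵥ x) := by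
  set u : EuclideanSpace ℝ m := WithLp.toLp 2 (B *ᵥ x)
  have hQx : (Bᴴ * B) *ᵥ x = Bᴴ *ᵥ u := (mulVec_mulVec _ _ _).symm
  have hq : √(((Bᴴ * B) *ᵥ x) ⬝ᵥ x) = ‖u‖ := by
    rw [hQx, conjTranspose_eq_transpose_of_trivial, mulVec_transpose, ← dotProduct_mulVec,
      ← Real.sqrt_sq (norm_nonneg u), ← real_inner_self_eq_norm_sq]
    rfl
  rw [hq, hQx, cubeNormHessian, Matrix.mul_add, Matrix.add_mul, Matrix.mul_smul, Matrix.smul_mul,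
    Matrix.mul_one, Matrix.mul_smul, Matrix.smul_mul, mul_vecMulVec, vecMulVec_mul,
    ← mulVec_transpose, conjTranspose_eq_transpose_of_trivial]

theorem stmt_4_general (d : ℕ) (Q : Matrix (Fin d) (Fin d) ℝ) (hQ : Q.PosSemidef)
    (H : EuclideanSpace ℝ (Fin d) → Matrix (Fin d) (Fin d) ℝ)
    (hH : ∀ x : EuclideanSpace ℝ (Fin d),
      H x = Real.sqrt ((Q *ᵥ x) ⬝ᵥ x) • Q +
        (if (Q *ᵥ x) ⬝ᵥ x = 0 then 0
          else (Real.sqrt ((Q *ᵥ x) ⬝ᵥ x))⁻¹ • vecMulVec (Q *ᵥ x) (Q *ᵥ x))) :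
    ∀ x y : EuclideanSpace ℝ (Fin d),
      ‖H x - H y‖ ≤ 2 * ‖Q‖ ^ ((3 : ℝ) / 2) * ‖x - y‖ := by
  obtain ⟨B, rfl⟩ : ∃ B : Matrix (Fin d) (Fin d) ℝ, Q = Bᴴ * B := by
    open scoped MatrixOrder in
    exact CStarAlgebra.nonneg_iff_eq_star_mul_self.mp hQ.nonneg
  have hH' (z : EuclideanSpace ℝ (Fin d)) :
      H z = Bᴴ * cubeNormHessian (WithLp.toLp 2 (B *ᵥ z)) * B := by
    rw [hH z, conjTranspose_mul_cubeNormHessian_mul]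
    split_ifs with h
    · rw [h]
      simp
    · rfl
  have hB : ‖Bᴴ * B‖ ^ ((3 : ℝ) / 2) = ‖B‖ ^ 3 := by
    rw [l2_opNorm_conjTranspose_mul_self, ← sq, ← Real.rpow_natCast,
      ← Real.rpow_mul (norm_nonneg _)]
    norm_num
  intro x y
  have hBxy : ‖WithLp.toLp 2 (B *ᵥ x) - WithLp.toLp 2 (B *ᵥ y)‖ ≤ ‖B‖ * ‖x - y‖ := by
    rw [← WithLp.toLp_sub, ← mulVec_sub, ← WithLp.ofLp_sub]
    exact l2_opNorm_mulVec B (x - y)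
  calc ‖H x - H y‖
      = ‖Bᴴ * (cubeNormHessian (WithLp.toLp 2 (B *ᵥ x)) -
          cubeNormHessian (WithLp.toLp 2 (B *ᵥ y))) * B‖ := by rw [hH', hH', mul_sub, sub_mul]
    _ ≤ 2 * (‖B‖ * ‖x - y‖) * ‖B‖ ^ 2 := by
        grw [l2_opNorm_conjTranspose_mul_mul_self_le, l2_opNorm_cubeNormHessian_sub_le, hBxy]
    _ = 2 * ‖Bᴴ * B‖ ^ ((3 : ℝ) / 2) * ‖x - y‖ := by rw [hB]; ring

/-- Lipschitz estimate for the Hessian `H x = ⟪Qx,x⟫^{1/2} Q + ⟪Qx,x⟫^{-1/2} (Qx)(Qx)ᵀ`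
of the cubic part of the confining potential, in the ℓ²-operator norm:
`‖H x - H y‖ ≤ 2 ‖Q‖^{3/2} ‖x - y‖`. -/
theorem stmt_4 (d : ℕ) (hd : 1 ≤ d) (Q : Matrix (Fin d) (Fin d) ℝ) (hQ : Q.PosSemidef)
    (H : EuclideanSpace ℝ (Fin d) → Matrix (Fin d) (Fin d) ℝ)
    (hH : ∀ x : EuclideanSpace ℝ (Fin d),
      H x = Real.sqrt ((Q *ᵥ x) ⬝ᵥ x) • Q +
        (if (Q *ᵥ x) ⬝ᵥ x = 0 then 0
          else (Real.sqrt ((Q *ᵥ x) ⬝ᵥ x))⁻¹ • vecMulVec (Q *ᵥ x) (Q *ᵥ x))) :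
    ∀ x y : EuclideanSpace ℝ (Fin d),
      ‖H x - H y‖ ≤ 2 * ‖Q‖ ^ ((3 : ℝ) / 2) * ‖x - y‖ :=
  stmt_4_general d Q hQ H hH
end

section
/- Let r ≥ 1, u₁, u₂ ∈ ℝ, and let U₁ : ℝ → ℝ and U₂ : ℝ² → ℝ be twice continuously differentiable with U₁''(a) ≥ u₁ for all a ∈ ℝ and D²U₂(z)[w, w] ≥ u₂‖w‖² for all z, w ∈ ℝ². Define V : ℝ^r → ℝ by V(x) = Σ_{1≤i≤r} U₁(x_i) + Σ_{1≤i<j≤r} U₂(x_i, x_j). Then for every x ∈ ℝ^r and every v ∈ ℝ^r, the second derivative of V satisfies D²V(x)[v, v] ≥ (u₁ + (r-1)·u₂)·‖v‖². -/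
/-!
The Hessian quadratic form is additive and transforms under a linear change of variables
`L` by `D²(f ∘ L)(x)[v, v] = D²f(L x)[L v, L v]`. Hence the term `U₁(xᵢ)` contributes at least
`u₁ vᵢ²` and the term `U₂(xᵢ, xⱼ)` at least `u₂ (vᵢ² + vⱼ²)`; since every index lies in exactly
`r - 1` pairs, the pair terms add up to `(r - 1) u₂ ‖v‖²`.
-/

open Finset

section PairSums

variable {ι R : Type*} [Fintype ι] [LinearOrder ι] [CommRing R]

lemma card_filter_lt_add_card_filter_gt (i : ι) :
    #{j | i < j} + #{j | j < i} = Fintype.card ι - 1 := by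
  rw [← card_union_of_disjoint (disjoint_filter.2 fun _ _ h h' => lt_asymm h h'), ← card_univ,
    ← card_erase_of_mem (mem_univ i)]
  congr 1
  ext j
  simp [ne_comm]

lemma sum_sum_filter_lt_add_eq (g : ι → R) :
    ∑ i, ∑ j with i < j, (g i + g j) = (Fintype.card ι - 1 : R) * ∑ i, g i := by
  have hswap : ∑ i, ∑ j with i < j, g j = ∑ i, ∑ j with j < i, g i :=
    sum_comm' fun _ _ => by simp
  have hcard (i : ι) : (#{j | i < j} + #{j | j < i} : R) = Fintype.card ι - 1 := by
    have hpos : 1 ≤ Fintype.card ι := Fintype.card_pos_iff.2 ⟨i⟩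
    rw [← Nat.cast_add, card_filter_lt_add_card_filter_gt, Nat.cast_sub hpos, Nat.cast_one]
  calc ∑ i, ∑ j with i < j, (g i + g j)
      = ∑ i, ∑ j with i < j, g i + ∑ i, ∑ j with j < i, g i := by
        rw [← hswap, ← sum_add_distrib]
        simp only [sum_add_distrib]
    _ = ∑ i, (#{j | i < j} + #{j | j < i} : R) * g i := by
        rw [← sum_add_distrib]
        simp only [sum_const, nsmul_eq_mul, add_mul]
    _ = (Fintype.card ι - 1 : R) * ∑ i, g i := by
        simp only [hcard, mul_sum]

end PairSums

section Hessian

variable {𝕜 E F G : Type*} [NontriviallyNormedField 𝕜]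
  [NormedAddCommGroup E] [NormedSpace 𝕜 E] [NormedAddCommGroup F] [NormedSpace 𝕜 F]
  [NormedAddCommGroup G] [NormedSpace 𝕜 G]

lemma iteratedFDeriv_two_comp_clm_apply {f : F → G} (hf : ContDiff 𝕜 2 f) (L : E →L[𝕜] F)
    (x v : E) :
    iteratedFDeriv 𝕜 2 (f ∘ L) x ![v, v] = iteratedFDeriv 𝕜 2 f (L x) ![L v, L v] := by
  rw [L.iteratedFDeriv_comp_right hf x le_rfl,
    ContinuousMultilinearMap.compContinuousLinearMap_apply]
  congr 1
  ext k
  fin_cases k <;> rfl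

lemma iteratedFDeriv_two_apply_diag (f : 𝕜 → F) (a s : 𝕜) :
    iteratedFDeriv 𝕜 2 f a ![s, s] = s ^ 2 • iteratedDeriv 2 f a := by
  rw [iteratedFDeriv_apply_eq_iteratedDeriv_mul_prod, Fin.prod_univ_two, sq]
  rfl

end Hessian

section HessianLowerBounds

variable {E F : Type*} [NormedAddCommGroup E] [NormedSpace ℝ E]
  [NormedAddCommGroup F] [NormedSpace ℝ F]

lemma mul_norm_sq_le_iteratedFDeriv_two_comp_clm {f : F → ℝ} (hf : ContDiff ℝ 2 f) {c : ℝ}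
    (hc : ∀ z w, c * ‖w‖ ^ 2 ≤ iteratedFDeriv ℝ 2 f z ![w, w]) (L : E →L[ℝ] F) (x v : E) :
    c * ‖L v‖ ^ 2 ≤ iteratedFDeriv ℝ 2 (f ∘ L) x ![v, v] := by
  rw [iteratedFDeriv_two_comp_clm_apply hf]
  exact hc _ _

variable {x v : E}

lemma add_le_iteratedFDeriv_two_add {f g : E → ℝ} (hf : ContDiff ℝ 2 f) (hg : ContDiff ℝ 2 g)
    {a b : ℝ} (ha : a ≤ iteratedFDeriv ℝ 2 f x ![v, v]) (hb : b ≤ iteratedFDeriv ℝ 2 g x ![v, v]) :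
    a + b ≤ iteratedFDeriv ℝ 2 (fun y => f y + g y) x ![v, v] := by
  rw [fun_iteratedFDeriv_add_apply hf.contDiffAt hg.contDiffAt]
  exact add_le_add ha hb

lemma sum_le_iteratedFDeriv_two_sum {ι : Type*} (s : Finset ι) {f : ι → E → ℝ}
    (hf : ∀ i ∈ s, ContDiff ℝ 2 (f i)) {c : ι → ℝ}
    (hc : ∀ i ∈ s, c i ≤ iteratedFDeriv ℝ 2 (f i) x ![v, v]) :
    ∑ i ∈ s, c i ≤ iteratedFDeriv ℝ 2 (fun y => ∑ i ∈ s, f i y) x ![v, v] := by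
  rw [iteratedFDeriv_fun_sum_apply fun i hi => (hf i hi).contDiffAt, _root_.sum_apply]
  exact sum_le_sum hc

end HessianLowerBounds

noncomputable def pairProj {ι : Type*} [Fintype ι] (i j : ι) :
    EuclideanSpace ℝ ι →L[ℝ] EuclideanSpace ℝ (Fin 2) :=
  LinearMap.toContinuousLinearMap
    { toFun x := WithLp.toLp 2 ![x i, x j]
      map_add' _ _ := by ext k; fin_cases k <;> rfl
      map_smul' _ _ := by ext k; fin_cases k <;> rfl }

lemma norm_pairProj_sq {ι : Type*} [Fintype ι] (i j : ι) (v : EuclideanSpace ℝ ι) :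
    ‖pairProj i j v‖ ^ 2 = v i ^ 2 + v j ^ 2 := by
  rw [EuclideanSpace.real_norm_sq_eq, Fin.sum_univ_two]
  rfl

theorem stmt_5_general (r : ℕ) (u₁ u₂ : ℝ)
    (U₁ : ℝ → ℝ) (U₂ : EuclideanSpace ℝ (Fin 2) → ℝ)
    (hU₁ : ContDiff ℝ 2 U₁) (hU₂ : ContDiff ℝ 2 U₂)
    (hU₁'' : ∀ a : ℝ, u₁ ≤ iteratedDeriv 2 U₁ a)
    (hU₂'' : ∀ z w : EuclideanSpace ℝ (Fin 2),
      u₂ * ‖w‖ ^ 2 ≤ iteratedFDeriv ℝ 2 U₂ z ![w, w])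
    (V : EuclideanSpace ℝ (Fin r) → ℝ)
    (hV : ∀ x : EuclideanSpace ℝ (Fin r),
      V x = (∑ i : Fin r, U₁ (x i)) +
        ∑ i : Fin r, ∑ j ∈ univ.filter (fun j => i < j),
          U₂ (WithLp.toLp 2 ![x i, x j] : EuclideanSpace ℝ (Fin 2))) :
    ∀ x v : EuclideanSpace ℝ (Fin r),
      (u₁ + (r - 1 : ℝ) * u₂) * ‖v‖ ^ 2 ≤ iteratedFDeriv ℝ 2 V x ![v, v] := by
  intro x v
  obtain rfl : V = _ := funext hV
  have hU₁_form (a s : ℝ) : u₁ * ‖s‖ ^ 2 ≤ iteratedFDeriv ℝ 2 U₁ a ![s, s] := by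
    rw [iteratedFDeriv_two_apply_diag, Real.norm_eq_abs, sq_abs, smul_eq_mul, mul_comm]
    exact mul_le_mul_of_nonneg_left (hU₁'' a) (sq_nonneg s)
  have hsum : (u₁ + (r - 1 : ℝ) * u₂) * ‖v‖ ^ 2 =
      ∑ i, u₁ * ‖EuclideanSpace.proj (𝕜 := ℝ) i v‖ ^ 2 +
        ∑ i : Fin r, ∑ j with i < j, u₂ * ‖pairProj i j v‖ ^ 2 := by
    simp only [← mul_sum, norm_pairProj_sq, sum_sum_filter_lt_add_eq, Fintype.card_fin,
      PiLp.proj_apply, Real.norm_eq_abs, sq_abs, ← EuclideanSpace.real_norm_sq_eq]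
    ring
  have hU₁_comp (i : Fin r) : ContDiff ℝ 2 (U₁ ∘ EuclideanSpace.proj (𝕜 := ℝ) i) :=
    hU₁.comp (EuclideanSpace.proj (𝕜 := ℝ) i).contDiff
  have hU₂_comp (i j : Fin r) : ContDiff ℝ 2 (U₂ ∘ pairProj i j) :=
    hU₂.comp (pairProj i j).contDiff
  rw [hsum]
  exact add_le_iteratedFDeriv_two_add (ContDiff.sum fun i _ => hU₁_comp i)
    (ContDiff.sum fun i _ => ContDiff.sum fun j _ => hU₂_comp i j)
    (sum_le_iteratedFDeriv_two_sum _ (fun i _ => hU₁_comp i) fun i _ =>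
      mul_norm_sq_le_iteratedFDeriv_two_comp_clm hU₁ hU₁_form _ x v)
    (sum_le_iteratedFDeriv_two_sum _
      (fun i _ => ContDiff.sum fun j _ => hU₂_comp i j) fun i _ =>
        sum_le_iteratedFDeriv_two_sum _ (fun j _ => hU₂_comp i j) fun j _ =>
          mul_norm_sq_le_iteratedFDeriv_two_comp_clm hU₂ hU₂'' _ x v)

/-- Hessian lower bound for the interacting potential
`V x = ∑ᵢ U₁ (xᵢ) + ∑_{i<j} U₂ (xᵢ, xⱼ)`: if `U₁'' ≥ u₁` and the Hessian of `U₂`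
is bounded below by `u₂`, then the Hessian of `V` is bounded below by
`u₁ + (r - 1) u₂`. -/
theorem stmt_5 (r : ℕ) (hr : 1 ≤ r) (u₁ u₂ : ℝ)
    (U₁ : ℝ → ℝ) (U₂ : EuclideanSpace ℝ (Fin 2) → ℝ)
    (hU₁ : ContDiff ℝ 2 U₁) (hU₂ : ContDiff ℝ 2 U₂)
    (hU₁'' : ∀ a : ℝ, u₁ ≤ iteratedDeriv 2 U₁ a)
    (hU₂'' : ∀ z w : EuclideanSpace ℝ (Fin 2),
      u₂ * ‖w‖ ^ 2 ≤ iteratedFDeriv ℝ 2 U₂ z ![w, w])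
    (V : EuclideanSpace ℝ (Fin r) → ℝ)
    (hV : ∀ x : EuclideanSpace ℝ (Fin r),
      V x = (∑ i : Fin r, U₁ (x i)) +
        ∑ i : Fin r, ∑ j ∈ univ.filter (fun j => i < j),
          U₂ (WithLp.toLp 2 ![x i, x j] : EuclideanSpace ℝ (Fin 2))) :
    ∀ x v : EuclideanSpace ℝ (Fin r),
      (u₁ + (r - 1 : ℝ) * u₂) * ‖v‖ ^ 2 ≤ iteratedFDeriv ℝ 2 V x ![v, v] :=
  stmt_5_general r u₁ u₂ U₁ U₂ hU₁ hU₂ hU₁'' hU₂'' V hV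
end

section
/- Let α ≥ 1 and let λ_R, λ_S be positive real numbers, and define λ_{R,S} := (8e)^{-1}·λ_R·√(λ_S)·(1 + 2/(λ_R·λ_S))^{-1}. If λ_S > 4 and λ_R > 2αe·(1 + √(1 + 1/(2αe))), then λ_{R,S} > α. -/
/-- Second sufficient condition from the appendix: for `α ≥ 1`, if `λ_S > 4` and
`λ_R > 2αe (1 + √(1 + 1/(2αe)))`, then `λ_{R,S} > α`, where
`λ_{R,S} = (8e)⁻¹ λ_R √λ_S (1 + 2/(λ_R λ_S))⁻¹`. -/
theorem stmt_8 (α : ℝ) (hα : 1 ≤ α) (lamR lamS : ℝ) (hR : 0 < lamR) (hS : 0 < lamS)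
    (lamRS : ℝ)
    (hRS : lamRS = (8 * Real.exp 1)⁻¹ * lamR * Real.sqrt lamS *
      (1 + 2 / (lamR * lamS))⁻¹)
    (h1 : 4 < lamS)
    (h2 : 2 * α * Real.exp 1 *
      (1 + Real.sqrt (1 + 1 / (2 * α * Real.exp 1))) < lamR) :
    α < lamRS := by
  have he : 0 < Real.exp 1 := Real.exp_pos 1
  set c : ℝ := 2 * α * Real.exp 1 with hc
  have hcpos : 0 < c := by positivity
  have hsq : c * Real.sqrt (1 + 1 / c) = Real.sqrt (c ^ 2 + c) := by
    rw [show c * Real.sqrt (1 + 1 / c) = Real.sqrt (c ^ 2) * Real.sqrt (1 + 1 / c) by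
      rw [Real.sqrt_sq hcpos.le],
      ← Real.sqrt_mul (by positivity)]
    congr 1
    field_simp
  have h2' : c + Real.sqrt (c ^ 2 + c) < lamR := by
    have heq : c * (1 + Real.sqrt (1 + 1 / c)) = c + Real.sqrt (c ^ 2 + c) := by
      rw [mul_add, mul_one, hsq]
    rw [heq] at h2; exact h2
  have hsnn : 0 ≤ Real.sqrt (c ^ 2 + c) := Real.sqrt_nonneg _
  have hsqval : Real.sqrt (c ^ 2 + c) ^ 2 = c ^ 2 + c :=
    Real.sq_sqrt (by positivity)
  have hkey : 2 * c * lamR + c < lamR ^ 2 := by nlinarith [h2', hsnn, hsqval]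
  -- sqrt lamS > 2
  have hsS : 2 < Real.sqrt lamS := by
    have h4 : Real.sqrt 4 < Real.sqrt lamS := Real.sqrt_lt_sqrt (by norm_num) h1
    have : Real.sqrt 4 = 2 := by
      rw [show (4 : ℝ) = 2 ^ 2 by norm_num, Real.sqrt_sq (by norm_num)]
    linarith
  have hd : (0 : ℝ) < 1 + 2 / (lamR * lamS) := by positivity
  rw [hRS, show (8 * Real.exp 1)⁻¹ * lamR * Real.sqrt lamS * (1 + 2 / (lamR * lamS))⁻¹
      = (lamR * Real.sqrt lamS) / ((8 * Real.exp 1) * (1 + 2 / (lamR * lamS))) by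
        have hne : (1 + 2 / (lamR * lamS)) ≠ 0 := ne_of_gt hd
        field_simp,
    lt_div_iff₀ (by positivity)]
  have hu : 2 / (lamR * lamS) * (lamR * lamS) = 2 :=
    div_mul_cancel₀ 2 (by positivity)
  have hupos : 0 < 2 / (lamR * lamS) := by positivity
  have husmall : 2 / (lamR * lamS) * lamR < 1 / 2 := by nlinarith
  have hce : α * (8 * Real.exp 1) = 4 * c := by rw [hc]; ring
  nlinarith [hkey, hsS, husmall, hR, hcpos, mul_pos hR (sub_pos.2 hsS),
    mul_pos hcpos hupos, hce, mul_lt_mul_of_pos_left husmall (show (0:ℝ) < 4 * c by positivity)]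
end

section
/- Let d ≥ 1, let B and D be real d×d matrices, let λ > 0 be such that ⟪v, (B + Bᵀ) v⟫ ≤ -λ·‖v‖² for all v ∈ ℝ^d, let p and P be real symmetric positive semidefinite d×d matrices, let Q be a real symmetric d×d matrix, and let ρ ≥ 0. Then ⟨Q, (B - (ρ/2)(p + P))·Q + Q·(B - (ρ/2)(p + P))ᵀ + D·P + P·Dᵀ⟩ ≤ -λ·‖Q‖_F² + 2·‖D‖·tr(P)·‖Q‖_F, where ⟨·,·⟩ and ‖·‖_F are the Frobenius inner product and norm and ‖D‖ is the ℓ²-operator norm of D. -/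
open Matrix
open scoped Matrix.Norms.L2Operator

/-!
Since `Q` and `P` are symmetric, the matrix paired with `Q` is `Y + Yᵀ` for
`Y = (B - (ρ/2)(p + P)) Q + D P`, so the pairing is `2 tr(Qᵀ Y)`, which splits into
`tr(Qᵀ (B + Bᵀ) Q) ≤ -λ ‖Q‖_F²` (column by column from the hypothesis on `B`),
`-ρ tr(Qᵀ (p + P) Q) ≤ 0` (positivity) and `2 tr(Qᵀ D P)`. For the last term, writing
`P = ∑ vᵢ vᵢᵀ` gives `tr(A P) ≤ ‖A‖ tr P`, and `‖Qᵀ D‖ ≤ ‖Q‖_F ‖D‖` because the operator norm is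
dominated by the Frobenius norm.
-/

namespace Matrix

section OperatorNorm

variable {m n : Type*} [Fintype m] [Fintype n] [DecidableEq n]

lemma dotProduct_mulVec_le_l2_opNorm_mul (A : Matrix n n ℝ) (v : n → ℝ) :
    v ⬝ᵥ (A *ᵥ v) ≤ ‖A‖ * (v ⬝ᵥ v) := by
  set x : EuclideanSpace ℝ n := WithLp.toLp 2 v
  calc v ⬝ᵥ (A *ᵥ v) = inner ℝ ((EuclideanSpace.equiv n ℝ).symm (A *ᵥ x)) x := by
        simp [x, EuclideanSpace.inner_eq_star_dotProduct]
    _ ≤ ‖(EuclideanSpace.equiv n ℝ).symm (A *ᵥ x)‖ * ‖x‖ := real_inner_le_norm _ _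
    _ ≤ ‖A‖ * ‖x‖ * ‖x‖ := by gcongr; exact l2_opNorm_mulVec A x
    _ = ‖A‖ * (v ⬝ᵥ v) := by
        rw [mul_assoc, ← sq, EuclideanSpace.real_norm_sq_eq]
        simp [x, dotProduct, sq]

lemma trace_mul_le_l2_opNorm_mul_trace (A : Matrix n n ℝ) {P : Matrix n n ℝ}
    (hP : P.PosSemidef) : (A * P).trace ≤ ‖A‖ * P.trace := by
  obtain ⟨k, v, rfl⟩ := posSemidef_iff_eq_sum_vecMulVec.mp hP
  simp only [Finset.mul_sum, trace_sum, star_trivial, mul_vecMulVec, trace_vecMulVec]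
  gcongr with i
  rw [dotProduct_comm]
  exact dotProduct_mulVec_le_l2_opNorm_mul A (v i)

omit [DecidableEq n] in
lemma trace_transpose_mul_self_eq_sum_sq (A : Matrix m n ℝ) :
    (Aᵀ * A).trace = ∑ i, ∑ j, A i j ^ 2 := by
  simp only [trace, diag, mul_apply, transpose_apply, sq]
  exact Finset.sum_comm

lemma l2_opNorm_le_sqrt_trace_transpose_mul_self (A : Matrix m n ℝ) :
    ‖A‖ ≤ √((Aᵀ * A).trace) := by
  have htr : 0 ≤ (Aᵀ * A).trace := (posSemidef_conjTranspose_mul_self A).trace_nonneg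
  refine ContinuousLinearMap.opNorm_le_bound _ (Real.sqrt_nonneg _) fun x => ?_
  refine le_of_pow_le_pow_left₀ two_ne_zero (by positivity) ?_
  rw [mul_pow, Real.sq_sqrt htr, EuclideanSpace.real_norm_sq_eq, EuclideanSpace.real_norm_sq_eq,
    trace_transpose_mul_self_eq_sum_sq, Finset.sum_mul]
  gcongr with i
  simpa [mulVec, dotProduct] using Finset.sum_mul_sq_le_sq_mul_sq Finset.univ (A i) x

end OperatorNorm

section Trace

variable {m n : Type*} [Fintype m] [Fintype n]

lemma trace_transpose_mul_mul_eq_sum (A : Matrix n n ℝ) (Q : Matrix n m ℝ) :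
    (Qᵀ * A * Q).trace = ∑ j, Qᵀ j ⬝ᵥ (A *ᵥ Qᵀ j) := by
  simp only [trace, diag, mul_apply, mulVec, dotProduct, transpose_apply, Finset.mul_sum,
    Finset.sum_mul]
  refine Finset.sum_congr rfl fun j _ => Finset.sum_comm.trans ?_
  simp only [mul_assoc]

lemma trace_transpose_mul_mul_le_of_dotProduct_mulVec_le {A : Matrix n n ℝ} {c : ℝ}
    (hA : ∀ v, v ⬝ᵥ (A *ᵥ v) ≤ c * (v ⬝ᵥ v)) (Q : Matrix n m ℝ) :
    (Qᵀ * A * Q).trace ≤ c * (Qᵀ * Q).trace := by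
  calc (Qᵀ * A * Q).trace = ∑ j, Qᵀ j ⬝ᵥ (A *ᵥ Qᵀ j) := trace_transpose_mul_mul_eq_sum A Q
    _ ≤ ∑ j, c * (Qᵀ j ⬝ᵥ Qᵀ j) := Finset.sum_le_sum fun j _ => hA _
    _ = c * (Qᵀ * Q).trace := by
        rw [← Finset.mul_sum]
        simp [trace, mul_apply, dotProduct]

lemma trace_mul_add_transpose_of_isSymm {Q : Matrix n n ℝ} (hQ : Q.IsSymm) (Y : Matrix n n ℝ) :
    (Q * (Y + Yᵀ)).trace = 2 * (Q * Y).trace := by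
  rw [Matrix.mul_add, trace_add, two_mul, ← trace_transpose (Q * Yᵀ), transpose_mul,
    transpose_transpose, hQ.eq, trace_mul_comm]

lemma trace_transpose_mul_lyapunov_eq (B D p : Matrix n n ℝ) {P Q : Matrix n n ℝ}
    (hP : P.IsSymm) (hQ : Q.IsSymm) (ρ : ℝ) :
    (Qᵀ * ((B - (ρ / 2) • (p + P)) * Q + Q * (B - (ρ / 2) • (p + P))ᵀ
        + D * P + P * Dᵀ)).trace
      = (Qᵀ * (B + Bᵀ) * Q).trace - ρ * (Qᵀ * (p + P) * Q).trace
        + 2 * (Qᵀ * D * P).trace := by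
  set Y := (B - (ρ / 2) • (p + P)) * Q + D * P
  have hY : (B - (ρ / 2) • (p + P)) * Q + Q * (B - (ρ / 2) • (p + P))ᵀ + D * P + P * Dᵀ
      = Y + Yᵀ := by
    simp only [Y, transpose_add, transpose_mul, hQ.eq, hP.eq]
    abel
  have hBt : (Qᵀ * (Bᵀ * Q)).trace = (Qᵀ * (B * Q)).trace := by
    rw [← trace_transpose]
    simp [Matrix.mul_assoc]
  rw [hY, trace_mul_add_transpose_of_isSymm hQ.transpose]
  simp only [Y, Matrix.add_mul, Matrix.mul_add, Matrix.sub_mul, Matrix.mul_sub, trace_add,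
    trace_sub, hBt, Matrix.smul_mul, Matrix.mul_smul, trace_smul, smul_eq_mul, Matrix.mul_assoc]
  ring

end Trace

end Matrix

theorem stmt_13_general (d : ℕ) (B D : Matrix (Fin d) (Fin d) ℝ)
    (lam : ℝ)
    (hB : ∀ v : Fin d → ℝ, v ⬝ᵥ ((B + Bᵀ) *ᵥ v) ≤ -lam * (v ⬝ᵥ v))
    (p P : Matrix (Fin d) (Fin d) ℝ) (hp : p.PosSemidef) (hP : P.PosSemidef)
    (Q : Matrix (Fin d) (Fin d) ℝ) (hQ : Q.IsSymm) (ρ : ℝ) (hρ : 0 ≤ ρ) :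
    (Qᵀ * ((B - (ρ / 2) • (p + P)) * Q + Q * (B - (ρ / 2) • (p + P))ᵀ
        + D * P + P * Dᵀ)).trace
      ≤ -lam * (Qᵀ * Q).trace
        + 2 * ‖D‖ * P.trace * Real.sqrt ((Qᵀ * Q).trace) := by
  rw [trace_transpose_mul_lyapunov_eq B D p (isHermitian_iff_isSymm.mp hP.isHermitian) hQ ρ]
  have hBQ := trace_transpose_mul_mul_le_of_dotProduct_mulVec_le hB Q
  have hpPQ : 0 ≤ (Qᵀ * (p + P) * Q).trace :=
    ((hp.add hP).conjTranspose_mul_mul_same Q).trace_nonneg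
  have hQn : ‖Qᵀ‖ ≤ √((Qᵀ * Q).trace) := by
    simpa only [hQ.eq] using l2_opNorm_le_sqrt_trace_transpose_mul_self Qᵀ
  have hDQ : (Qᵀ * D * P).trace ≤ ‖D‖ * P.trace * √((Qᵀ * Q).trace) :=
    calc (Qᵀ * D * P).trace ≤ ‖Qᵀ * D‖ * P.trace := trace_mul_le_l2_opNorm_mul_trace _ hP
      _ ≤ √((Qᵀ * Q).trace) * ‖D‖ * P.trace := by
          gcongr
          · exact hP.trace_nonneg
          · exact (l2_opNorm_mul _ _).trans (by gcongr)
      _ = ‖D‖ * P.trace * √((Qᵀ * Q).trace) := by ring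
  linarith [mul_nonneg hρ hpPQ]

/-- Drift estimate for the sample covariance error from the proof of Lemma 5.3:
`⟨Q, (B - (ρ/2)(p+P)) Q + Q (B - (ρ/2)(p+P))ᵀ + D P + P Dᵀ⟩
  ≤ -λ ‖Q‖_F² + 2 ‖D‖ tr(P) ‖Q‖_F`, where `⟨·,·⟩`, `‖·‖_F` are the Frobenius
inner product and norm and `‖D‖` is the ℓ²-operator norm. -/
theorem stmt_13 (d : ℕ) (hd : 1 ≤ d) (B D : Matrix (Fin d) (Fin d) ℝ)
    (lam : ℝ) (hlam : 0 < lam)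
    (hB : ∀ v : Fin d → ℝ, v ⬝ᵥ ((B + Bᵀ) *ᵥ v) ≤ -lam * (v ⬝ᵥ v))
    (p P : Matrix (Fin d) (Fin d) ℝ) (hp : p.PosSemidef) (hP : P.PosSemidef)
    (Q : Matrix (Fin d) (Fin d) ℝ) (hQ : Q.IsSymm) (ρ : ℝ) (hρ : 0 ≤ ρ) :
    (Qᵀ * ((B - (ρ / 2) • (p + P)) * Q + Q * (B - (ρ / 2) • (p + P))ᵀ
        + D * P + P * Dᵀ)).trace
      ≤ -lam * (Qᵀ * Q).trace
        + 2 * ‖D‖ * P.trace * Real.sqrt ((Qᵀ * Q).trace) :=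
  stmt_13_general d B D lam hB p P hp hP Q hQ ρ hρ
end
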